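/- arXiv:1609.06881 — 2 statements merged into one kernel-verified Lean document; each statement's English description precedes it below -/
import Mathlib

section
/- With S_0, …, S_8 the octonionic Pauli matrices on ℝ^16, the 36 operators J_{αβ} = S_α ∘ S_β for 0 ≤ α < β ≤ 8 are linearly independent elements of the Lie algebra of skew-adjoint endomorphisms of ℝ^16. -/
/-!
The right multiplications by imaginary octonions satisfy `(x u) v + (x v) u = -2 ⟨u, v⟩ x`
(the linearized right alternative law), so the `S_α` are pairwise anticommuting self-adjoint
involutions; hence each `J_{αβ}` with `α ≠ β` is skew-adjoint. For linear independence use the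
trace form `(A, B) ↦ tr (A B)`: if `p ≠ q` pick `e ∈ p \ q`; then `S_e` anticommutes with
`J_p J_q`, forcing `tr (J_p J_q) = 0`, while `J_p J_p = -1` has trace `-16 ≠ 0`.
-/

noncomputable section

/-- The octonions, realized as the Cayley–Dickson double `ℍ × ℍ` of the quaternions. -/
abbrev Oct : Type := Quaternion ℝ × Quaternion ℝ

/-- Cayley–Dickson multiplication on `𝕆 = ℍ × ℍ`:
`(a,b)·(c,d) = (a c − d̄ b, d a + b c̄)`. -/
def omul (x y : Oct) : Oct :=
  (x.1 * y.1 - star y.2 * x.2, y.2 * x.1 + x.2 * star y.1)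

/-- The real part of an octonion. -/
def oRe (x : Oct) : ℝ := x.1.re

/-- The standard Euclidean inner product on `𝕆 ≅ ℝ^8`, `⟨x,y⟩ = Re (x ȳ)`. -/
def oinner (x y : Oct) : ℝ := (x.1 * star y.1).re + (x.2 * star y.2).re

/-- Right multiplication `R_u : 𝕆 → 𝕆`, `x ↦ x·u`. -/
def Rmul (u : Oct) (x : Oct) : Oct := omul x u

/-- The standard imaginary unit octonions `e_1, …, e_7` (namely `i, j, k, e, f, g, h`). -/
def imUnit : ℕ → Oct
  | 1 => ((⟨0, 1, 0, 0⟩ : Quaternion ℝ), 0)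
  | 2 => ((⟨0, 0, 1, 0⟩ : Quaternion ℝ), 0)
  | 3 => ((⟨0, 0, 0, 1⟩ : Quaternion ℝ), 0)
  | 4 => (0, 1)
  | 5 => (0, (⟨0, 1, 0, 0⟩ : Quaternion ℝ))
  | 6 => (0, (⟨0, 0, 1, 0⟩ : Quaternion ℝ))
  | 7 => (0, (⟨0, 0, 0, 1⟩ : Quaternion ℝ))
  | _ => 0

/-- The nine octonionic Pauli matrices `S_0, …, S_8` acting on `𝕆² ≅ ℝ^16`:
`S_0(x,y) = (y,x)`, `S_α(x,y) = (−y·e_α, x·e_α)` for `α = 1,…,7`, and `S_8(x,y) = (x,−y)`. -/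
def PauliS (α : Fin 9) (p : Oct × Oct) : Oct × Oct :=
  if α.val = 0 then (p.2, p.1)
  else if α.val = 8 then (p.1, -p.2)
  else (-(omul p.2 (imUnit α.val)), omul p.1 (imUnit α.val))

/-- The product inner product on `𝕆² ≅ ℝ^16`. -/
def oinner2 (p q : Oct × Oct) : ℝ := oinner p.1 q.1 + oinner p.2 q.2

section AnticommutingInvolutions

variable {K M : Type*} [Field K] [AddCommGroup M] [Module K M]

theorem LinearMap.trace_eq_zero_of_involution_anticomm [CharZero K] {S X : Module.End K M}
    (hS : S * S = 1) (h : S * X = -(X * S)) : LinearMap.trace K M X = 0 := by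
  have hX : X = -(S * X * S) := by
    rw [h, neg_mul, neg_neg, mul_assoc, hS, mul_one]
  rw [← CharZero.eq_neg_self_iff]
  conv_lhs => rw [hX, map_neg, LinearMap.trace_mul_cycle, hS, one_mul]

variable {ι : Type*} {S : ι → Module.End K M}

theorem mul_anticomm_of_mem_of_not_mem (hanti : Pairwise fun a b => S a * S b = -(S b * S a))
    {a b c d e : ι} (hab : a ≠ b) (he : e = a ∨ e = b) (hec : e ≠ c) (hed : e ≠ d) :
    S e * (S a * S b * (S c * S d)) = -(S a * S b * (S c * S d) * S e) := by
  have hp : S e * (S a * S b) = -(S a * S b * S e) := by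
    rcases he with rfl | rfl
    · rw [mul_assoc (S e) (S b), hanti hab.symm, mul_neg, neg_neg]
    · rw [← mul_assoc, hanti hab.symm, neg_mul]
  have hq : S e * (S c * S d) = S c * S d * S e := by
    rw [← mul_assoc, hanti hec, neg_mul, mul_assoc, hanti hed, mul_neg, neg_neg, mul_assoc]
  rw [← mul_assoc, hp, neg_mul, mul_assoc, hq]
  simp only [mul_assoc]

theorem exists_mem_not_mem_of_ne [LinearOrder ι] {p q : {p : ι × ι // p.1 < p.2}}
    (hpq : p ≠ q) :
    ∃ e, (e = p.1.1 ∨ e = p.1.2) ∧ e ≠ q.1.1 ∧ e ≠ q.1.2 := by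
  obtain ⟨⟨a, b⟩, hab⟩ := p
  obtain ⟨⟨c, d⟩, hcd⟩ := q
  simp only [ne_eq, Subtype.mk.injEq, Prod.mk.injEq] at hpq hab hcd ⊢
  by_contra! h
  have ha := h a (.inl rfl)
  have hb := h b (.inr rfl)
  obtain rfl | hac := eq_or_ne a c
  · exact hpq ⟨rfl, hb hab.ne'⟩
  obtain rfl := ha hac
  obtain rfl | hbc := eq_or_ne b c
  · exact lt_asymm hab hcd
  · exact hab.ne' (hb hbc)

theorem linearIndependent_mul_of_anticomm [CharZero K] [FiniteDimensional K M] [Nontrivial M]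
    [LinearOrder ι] (hsq : ∀ a, S a * S a = 1)
    (hanti : Pairwise fun a b => S a * S b = -(S b * S a)) :
    LinearIndependent K (fun p : {p : ι × ι // p.1 < p.2} => S p.1.1 * S p.1.2) := by
  let B : LinearMap.BilinForm K (Module.End K M) :=
    (LinearMap.mul K (Module.End K M)).compr₂ (LinearMap.trace K M)
  refine LinearMap.BilinForm.linearIndependent_of_iIsOrtho (B := B) ?_ fun p => ?_
  · intro p q hpq
    obtain ⟨e, he, hec, hed⟩ := exists_mem_not_mem_of_ne hpq
    exact LinearMap.trace_eq_zero_of_involution_anticomm (hsq e)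
      (mul_anticomm_of_mem_of_not_mem hanti p.2.ne he hec hed)
  · have hJJ : S p.1.1 * S p.1.2 * (S p.1.1 * S p.1.2) = -1 := by
      rw [mul_assoc, ← mul_assoc (S p.1.2), hanti p.2.ne.symm, neg_mul, mul_neg, ← mul_assoc,
        ← mul_assoc, hsq, one_mul, hsq]
    change LinearMap.trace K M (S p.1.1 * S p.1.2 * (S p.1.1 * S p.1.2)) ≠ 0
    rw [hJJ, map_neg, LinearMap.trace_one, neg_ne_zero, Nat.cast_ne_zero]
    exact Module.finrank_pos.ne'

end AnticommutingInvolutions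

attribute [local simp] Quaternion.re_zero Quaternion.imI_zero Quaternion.imJ_zero
  Quaternion.imK_zero Quaternion.re_one Quaternion.imI_one Quaternion.imJ_one Quaternion.imK_one

lemma omul_add_left (x y u : Oct) : omul (x + y) u = omul x u + omul y u := by
  ext <;> simp [omul] <;> ring

lemma omul_smul_left (r : ℝ) (x u : Oct) : omul (r • x) u = r • omul x u := by
  ext <;> simp [omul] <;> ring

lemma omul_neg_left (x u : Oct) : omul (-x) u = -omul x u := by
  ext <;> simp [omul] <;> ring

lemma omul_coe_right (x : Oct) (r : ℝ) : omul x ((r : Quaternion ℝ), 0) = r • x := by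
  ext <;> simp [omul] <;> ring

lemma oinner_neg_left (x y : Oct) : oinner (-x) y = -oinner x y := by
  simp [oinner]
  ring

lemma oinner_neg_right (x y : Oct) : oinner x (-y) = -oinner x y := by
  simp [oinner]
  ring

lemma omul_omul_add_omul_omul (x u v : Oct) :
    omul (omul x u) v + omul (omul x v) u = omul x (omul u v + omul v u) := by
  ext <;> simp only [omul, Prod.fst_add, Prod.snd_add, Quaternion.re_add, Quaternion.imI_add,
    Quaternion.imJ_add, Quaternion.imK_add, Quaternion.re_sub, Quaternion.imI_sub,
    Quaternion.imJ_sub, Quaternion.imK_sub, Quaternion.re_mul, Quaternion.imI_mul,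
    Quaternion.imJ_mul, Quaternion.imK_mul, Quaternion.re_star, Quaternion.imI_star,
    Quaternion.imJ_star, Quaternion.imK_star] <;> ring

lemma omul_add_omul_of_oRe_eq_zero {u v : Oct} (hu : oRe u = 0) (hv : oRe v = 0) :
    omul u v + omul v u = (((-2 * oinner u v : ℝ) : Quaternion ℝ), 0) := by
  simp only [oRe] at hu hv
  ext <;> simp [omul, oinner, hu, hv] <;> ring

lemma oinner_omul_of_oRe_eq_zero {u : Oct} (hu : oRe u = 0) (x y : Oct) :
    oinner (omul x u) y = -oinner x (omul y u) := by
  simp only [oRe] at hu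
  simp [oinner, omul, hu]
  ring

lemma omul_omul_add_omul_omul_of_oRe_eq_zero {u v : Oct} (hu : oRe u = 0) (hv : oRe v = 0)
    (x : Oct) : omul (omul x u) v + omul (omul x v) u = (-2 * oinner u v) • x := by
  rw [omul_omul_add_omul_omul, omul_add_omul_of_oRe_eq_zero hu hv, omul_coe_right]

lemma oinner_eq_coords (x y : Oct) :
    oinner x y = x.1.re * y.1.re + x.1.imI * y.1.imI + x.1.imJ * y.1.imJ + x.1.imK * y.1.imK +
      (x.2.re * y.2.re + x.2.imI * y.2.imI + x.2.imJ * y.2.imJ + x.2.imK * y.2.imK) := by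
  simp [oinner]

lemma oRe_imUnit (n : ℕ) : oRe (imUnit n) = 0 := by
  unfold imUnit
  split <;> simp [oRe]

lemma oinner_imUnit_self {n : ℕ} (h1 : 1 ≤ n) (h7 : n ≤ 7) :
    oinner (imUnit n) (imUnit n) = 1 := by
  interval_cases n <;> simp [imUnit, oinner_eq_coords]

lemma oinner_imUnit_of_ne {m n : ℕ} (hmn : m ≠ n) : oinner (imUnit m) (imUnit n) = 0 := by
  rw [oinner_eq_coords]
  unfold imUnit
  split <;> split <;> simp_all

lemma omul_omul_imUnit_self {n : ℕ} (h1 : 1 ≤ n) (h7 : n ≤ 7) (x : Oct) :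
    omul (omul x (imUnit n)) (imUnit n) = -x := by
  have h := omul_omul_add_omul_omul_of_oRe_eq_zero (oRe_imUnit n) (oRe_imUnit n) x
  rw [oinner_imUnit_self h1 h7] at h
  linear_combination (norm := module) (1 / 2 : ℝ) • h

lemma omul_omul_imUnit_of_ne {m n : ℕ} (hmn : m ≠ n) (x : Oct) :
    omul (omul x (imUnit m)) (imUnit n) = -omul (omul x (imUnit n)) (imUnit m) := by
  have h := omul_omul_add_omul_omul_of_oRe_eq_zero (oRe_imUnit m) (oRe_imUnit n) x
  rw [oinner_imUnit_of_ne hmn, mul_zero, zero_smul] at h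
  exact eq_neg_of_add_eq_zero_left h

lemma PauliS_zero (p : Oct × Oct) : PauliS 0 p = (p.2, p.1) := rfl

lemma PauliS_eight (p : Oct × Oct) : PauliS 8 p = (p.1, -p.2) := rfl

lemma PauliS_of_one_le_of_le_seven {α : Fin 9} (h1 : 1 ≤ (α : ℕ)) (h7 : (α : ℕ) ≤ 7)
    (p : Oct × Oct) : PauliS α p = (-omul p.2 (imUnit α), omul p.1 (imUnit α)) := by
  unfold PauliS
  rw [if_neg (by omega), if_neg (by omega)]

def pauli (α : Fin 9) : Module.End ℝ (Oct × Oct) where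
  toFun := PauliS α
  map_add' p q := by
    unfold PauliS
    split_ifs <;> ext1 <;> simp only [Prod.fst_add, Prod.snd_add, omul_add_left, neg_add]
  map_smul' r p := by
    unfold PauliS
    split_ifs <;> ext1 <;> simp [omul_smul_left]

@[simp]
lemma pauli_apply (α : Fin 9) (p : Oct × Oct) : pauli α p = PauliS α p := rfl

lemma fin_nine_cases (α : Fin 9) : α = 0 ∨ α = 8 ∨ 1 ≤ (α : ℕ) ∧ (α : ℕ) ≤ 7 := by
  omega

lemma pauli_mul_self (α : Fin 9) : pauli α * pauli α = 1 := by
  refine LinearMap.ext fun p => ?_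
  obtain rfl | rfl | ⟨h1, h7⟩ := fin_nine_cases α
  · rfl
  · simp [PauliS_eight]
  · simp [PauliS_of_one_le_of_le_seven h1 h7, omul_neg_left, omul_omul_imUnit_self h1 h7]

lemma pauli_anticomm : Pairwise fun a b => pauli a * pauli b = -(pauli b * pauli a) := by
  intro a b hab
  refine LinearMap.ext fun p => ?_
  obtain rfl | rfl | ⟨ha1, ha7⟩ := fin_nine_cases a <;>
    obtain rfl | rfl | ⟨hb1, hb7⟩ := fin_nine_cases b <;>
    first
    | exact absurd rfl hab
    | simp [PauliS_zero, PauliS_eight, PauliS_of_one_le_of_le_seven, omul_neg_left, *,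
        omul_omul_imUnit_of_ne (Fin.val_ne_iff.mpr hab)]

lemma oinner2_neg_right (z w : Oct × Oct) : oinner2 z (-w) = -oinner2 z w := by
  simp only [oinner2, Prod.fst_neg, Prod.snd_neg, oinner_neg_right, neg_add]

lemma oinner2_PauliS_left (α : Fin 9) (z w : Oct × Oct) :
    oinner2 (PauliS α z) w = oinner2 z (PauliS α w) := by
  obtain rfl | rfl | ⟨h1, h7⟩ := fin_nine_cases α
  · exact add_comm _ _
  · simp [oinner2, PauliS_eight, oinner_neg_left, oinner_neg_right]
  · simp only [oinner2, PauliS_of_one_le_of_le_seven h1 h7, oinner_neg_left, oinner_neg_right,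
      oinner_omul_of_oRe_eq_zero (oRe_imUnit _)]
    ring

lemma oinner2_PauliS_PauliS_of_ne {a b : Fin 9} (hab : a ≠ b) (z w : Oct × Oct) :
    oinner2 (PauliS a (PauliS b z)) w = -oinner2 z (PauliS a (PauliS b w)) := by
  have hba : PauliS b (PauliS a w) = -PauliS a (PauliS b w) :=
    LinearMap.congr_fun (pauli_anticomm hab.symm) w
  rw [oinner2_PauliS_left, oinner2_PauliS_left, hba, oinner2_neg_right]

/-- The 36 operators `J_{αβ} = S_α ∘ S_β` for `0 ≤ α < β ≤ 8` are linearly independent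
elements of the space of skew-adjoint endomorphisms of `ℝ^16`. -/
theorem Jab_linearIndependent_skewAdjoint :
    LinearIndependent ℝ
      (fun p : {p : Fin 9 × Fin 9 // p.1 < p.2} =>
        (fun z => PauliS p.1.1 (PauliS p.1.2 z) : Oct × Oct → Oct × Oct)) ∧
    (∀ p : {p : Fin 9 × Fin 9 // p.1 < p.2}, ∀ z w : Oct × Oct,
      oinner2 (PauliS p.1.1 (PauliS p.1.2 z)) w
        = - oinner2 z (PauliS p.1.1 (PauliS p.1.2 w))) := by
  refine ⟨?_, fun p => oinner2_PauliS_PauliS_of_ne p.2.ne⟩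
  exact (linearIndependent_mul_of_anticomm pauli_mul_self pauli_anticomm).map_injOn
    (LinearMap.ltoFun ℝ (Oct × Oct) (Oct × Oct) ℝ) DFunLike.coe_injective.injOn

end
end

section
/- For the 5×5 skew-symmetric matrix ψ of Kähler 2-forms ψ_{αβ} associated to the quaternionic Pauli matrices on ℝ^8 (ψ_{αβ}(X,Y) = ⟨(S_α∘S_β)X, Y⟩ for α<β, extended skew-symmetrically, with values in Λ²ℝ^8), the coefficient τ₂(ψ) of t³ in the characteristic polynomial det(tI − ψ) computed in the exterior algebra equals −2(ω_{L_i}² + ω_{L_j}² + ω_{L_k}²), where ω_{L_i}, ω_{L_j}, ω_{L_k} are the Kähler forms of the three left quaternionic complex structures on ℍ² ≅ ℝ^8. -/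
noncomputable section

/-- `ℍ² ≅ ℝ^8`. -/
abbrev H2 : Type := Quaternion ℝ × Quaternion ℝ

/-- The Euclidean inner product on `ℍ`, `⟨x,y⟩ = Re (x ȳ)`. -/
def qinner (x y : Quaternion ℝ) : ℝ := (x * star y).re

/-- The product inner product on `ℍ² ≅ ℝ^8`. -/
def hinner (p q : H2) : ℝ := qinner p.1 q.1 + qinner p.2 q.2

/-- The basic quaternion units `i, j, k` (for `n = 1, 2, 3`). -/
def qUnit : ℕ → Quaternion ℝ
  | 1 => ⟨0, 1, 0, 0⟩
  | 2 => ⟨0, 0, 1, 0⟩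
  | 3 => ⟨0, 0, 0, 1⟩
  | _ => 0

/-- The five quaternionic Pauli matrices on `ℍ² ≅ ℝ^8`. -/
def hPauli (α : Fin 5) (p : H2) : H2 :=
  if α.val = 0 then (p.2, p.1)
  else if α.val = 4 then (p.1, -p.2)
  else (-(p.2 * qUnit α.val), p.1 * qUnit α.val)

/-- The matrix of Kähler 2-forms `ψ_{αβ}(X,Y) = ⟨(S_α ∘ S_β) X, Y⟩`. -/
def hpsi (α β : Fin 5) (X Y : H2) : ℝ := hinner (hPauli α (hPauli β X)) Y

/-- The wedge product of two 2-forms, as a 4-form on `ℝ^8` (shuffle formula). -/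
def wedge2 (a b : H2 → H2 → ℝ) (X : Fin 4 → H2) : ℝ :=
    a (X 0) (X 1) * b (X 2) (X 3) - a (X 0) (X 2) * b (X 1) (X 3)
  + a (X 0) (X 3) * b (X 1) (X 2) + a (X 1) (X 2) * b (X 0) (X 3)
  - a (X 1) (X 3) * b (X 0) (X 2) + a (X 2) (X 3) * b (X 0) (X 1)

/-- The Kähler 2-form `ω_{L_u}(X,Y) = ⟨L_u X, Y⟩` of the left multiplication by a
quaternion unit `u` on `ℍ²`. -/
def omegaL (u : Quaternion ℝ) (X Y : H2) : ℝ := hinner (u * X.1, u * X.2) Y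


/-! Each of the ten complex structures `J_{αβ} = S_α ∘ S_β` (`α < β`) acts on `ℍ² = ℍ ⊕ ℍ` by a
signed permutation of the two summands followed, except for `J_{04}`, by right multiplication by
one of `i, j, k` (using `ji = -k`, `ki = j`, `kj = -i`); the `L_u` act by left multiplication. So
all thirteen Kähler forms are sums of the forms `⟨x, y⟩`, `⟨x u, y⟩` and `⟨u x, y⟩` on `ℍ`, and
the identity becomes a polynomial identity in the 32 real coordinates of `X₀, …, X₃`. -/

lemma qUnit_one_components :
    (qUnit 1).re = 0 ∧ (qUnit 1).imI = 1 ∧ (qUnit 1).imJ = 0 ∧ (qUnit 1).imK = 0 :=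
  ⟨rfl, rfl, rfl, rfl⟩

lemma qUnit_two_components :
    (qUnit 2).re = 0 ∧ (qUnit 2).imI = 0 ∧ (qUnit 2).imJ = 1 ∧ (qUnit 2).imK = 0 :=
  ⟨rfl, rfl, rfl, rfl⟩

lemma qUnit_three_components :
    (qUnit 3).re = 0 ∧ (qUnit 3).imI = 0 ∧ (qUnit 3).imJ = 0 ∧ (qUnit 3).imK = 1 :=
  ⟨rfl, rfl, rfl, rfl⟩

section QuaternionUnits

open Quaternion

lemma qUnit_two_mul_one : qUnit 2 * qUnit 1 = -qUnit 3 := by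
  ext <;> simp [re_mul, imI_mul, imJ_mul, imK_mul, qUnit_one_components, qUnit_two_components,
    qUnit_three_components]

lemma qUnit_three_mul_one : qUnit 3 * qUnit 1 = qUnit 2 := by
  ext <;> simp [re_mul, imI_mul, imJ_mul, imK_mul, qUnit_one_components, qUnit_two_components,
    qUnit_three_components]

lemma qUnit_three_mul_two : qUnit 3 * qUnit 2 = -qUnit 1 := by
  ext <;> simp [re_mul, imI_mul, imJ_mul, imK_mul, qUnit_one_components, qUnit_two_components,
    qUnit_three_components]

variable (x y : Quaternion ℝ)

lemma qinner_eq_coords :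
    qinner x y = x.re * y.re + x.imI * y.imI + x.imJ * y.imJ + x.imK * y.imK := by
  simp [qinner, re_mul]

lemma qinner_neg_left : qinner (-x) y = -qinner x y := by
  simp [qinner]

lemma qinner_mul_qUnit_one :
    qinner (x * qUnit 1) y = x.re * y.imI - x.imI * y.re - x.imJ * y.imK + x.imK * y.imJ := by
  simp only [qinner, re_mul, imI_mul, imJ_mul, imK_mul, re_star, imI_star, imJ_star, imK_star,
    qUnit_one_components]
  ring

lemma qinner_mul_qUnit_two :
    qinner (x * qUnit 2) y = x.re * y.imJ - x.imJ * y.re + x.imI * y.imK - x.imK * y.imI := by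
  simp only [qinner, re_mul, imI_mul, imJ_mul, imK_mul, re_star, imI_star, imJ_star, imK_star,
    qUnit_two_components]
  ring

lemma qinner_mul_qUnit_three :
    qinner (x * qUnit 3) y = x.re * y.imK - x.imK * y.re - x.imI * y.imJ + x.imJ * y.imI := by
  simp only [qinner, re_mul, imI_mul, imJ_mul, imK_mul, re_star, imI_star, imJ_star, imK_star,
    qUnit_three_components]
  ring

lemma qinner_qUnit_one_mul :
    qinner (qUnit 1 * x) y = x.re * y.imI - x.imI * y.re + x.imJ * y.imK - x.imK * y.imJ := by
  simp only [qinner, re_mul, imI_mul, imJ_mul, imK_mul, re_star, imI_star, imJ_star, imK_star,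
    qUnit_one_components]
  ring

lemma qinner_qUnit_two_mul :
    qinner (qUnit 2 * x) y = x.re * y.imJ - x.imJ * y.re - x.imI * y.imK + x.imK * y.imI := by
  simp only [qinner, re_mul, imI_mul, imJ_mul, imK_mul, re_star, imI_star, imJ_star, imK_star,
    qUnit_two_components]
  ring

lemma qinner_qUnit_three_mul :
    qinner (qUnit 3 * x) y = x.re * y.imK - x.imK * y.re + x.imI * y.imJ - x.imJ * y.imI := by
  simp only [qinner, re_mul, imI_mul, imJ_mul, imK_mul, re_star, imI_star, imJ_star, imK_star,
    qUnit_three_components]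
  ring

end QuaternionUnits

lemma hPauli_of_ne_zero_of_ne_four {a : Fin 5} (h0 : a ≠ 0) (h4 : a ≠ 4) (p : H2) :
    hPauli a p = (-(p.2 * qUnit a), p.1 * qUnit a) := by
  have h0' : (a : ℕ) ≠ 0 := fun h => h0 (Fin.ext h)
  have h4' : (a : ℕ) ≠ 4 := fun h => h4 (Fin.ext h)
  rw [hPauli, if_neg h0', if_neg h4']

lemma hpsi_zero_four (X Y : H2) : hpsi 0 4 X Y = hinner (-X.2, X.1) Y := rfl

lemma hpsi_zero_of_ne_zero_of_ne_four {a : Fin 5} (h0 : a ≠ 0) (h4 : a ≠ 4) (X Y : H2) :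
    hpsi 0 a X Y = hinner (X.1 * qUnit a, -(X.2 * qUnit a)) Y := by
  rw [hpsi, hPauli_of_ne_zero_of_ne_four h0 h4]
  rfl

lemma hpsi_four_of_ne_zero_of_ne_four {a : Fin 5} (h0 : a ≠ 0) (h4 : a ≠ 4) (X Y : H2) :
    hpsi a 4 X Y = hinner (X.2 * qUnit a, X.1 * qUnit a) Y := by
  rw [hpsi, hPauli_of_ne_zero_of_ne_four h0 h4]
  simp [hPauli]

lemma hpsi_of_ne_zero_of_ne_four {a b : Fin 5} (ha0 : a ≠ 0) (ha4 : a ≠ 4) (hb0 : b ≠ 0)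
    (hb4 : b ≠ 4) (X Y : H2) :
    hpsi a b X Y = hinner (-(X.1 * (qUnit b * qUnit a)), -(X.2 * (qUnit b * qUnit a))) Y := by
  simp [hpsi, hPauli_of_ne_zero_of_ne_four ha0 ha4, hPauli_of_ne_zero_of_ne_four hb0 hb4,
    mul_assoc]

/-- For the `5×5` skew-symmetric matrix `ψ` of Kähler 2-forms of the quaternionic Pauli
matrices on `ℝ^8`, the coefficient `τ₂(ψ) = Σ_{α<β} ψ_{αβ} ∧ ψ_{αβ}` of `t³` in
`det(tI − ψ)` equals `−2(ω_{L_i}² + ω_{L_j}² + ω_{L_k}²)`. -/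
theorem tau2_eq_neg_two_quaternionic_four_form :
    ∀ X : Fin 4 → H2,
      (∑ α : Fin 5, ∑ β : Fin 5, if α < β then wedge2 (hpsi α β) (hpsi α β) X else 0)
        = -2 * (wedge2 (omegaL (qUnit 1)) (omegaL (qUnit 1)) X
              + wedge2 (omegaL (qUnit 2)) (omegaL (qUnit 2)) X
              + wedge2 (omegaL (qUnit 3)) (omegaL (qUnit 3)) X) := by
  intro X
  simp only [Fin.sum_univ_five, Fin.isValue, Fin.reduceLT, if_true, if_false, add_zero, zero_add]
  simp only [wedge2, ne_eq, Fin.reduceEq, not_false_eq_true, hpsi_zero_four,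
    hpsi_zero_of_ne_zero_of_ne_four, hpsi_four_of_ne_zero_of_ne_four, hpsi_of_ne_zero_of_ne_four,
    Fin.coe_ofNat_eq_mod, Nat.reduceMod, qUnit_two_mul_one, qUnit_three_mul_one,
    qUnit_three_mul_two, mul_neg, neg_neg]
  simp only [omegaL, hinner, qinner_neg_left, qinner_mul_qUnit_one, qinner_mul_qUnit_two,
    qinner_mul_qUnit_three, qinner_qUnit_one_mul, qinner_qUnit_two_mul, qinner_qUnit_three_mul]
  simp only [qinner_eq_coords]
  ring
end
end
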